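/- arXiv:math/0201256 — 3 statements merged into one kernel-verified Lean document; each statement's English description precedes it below -/
import Mathlib

section
/- Let D be a triangulated category, F = (F^i) and F' = (F'^i) cohomological functors from D to an abelian category, and φ: F → F' a natural transformation. Let S be a set of objects of D. Assume (i) there exists d ∈ ℤ such that F^i(X) = 0 = F'^i(X) for all i < d and all X ∈ S; (ii) for every X ∈ S there exists an exact (distinguished) triangle X → X̃ → Y with Y ∈ S such that φ: F^i(X̃) → F'^i(X̃) is an isomorphism for all i. Then φ: F^i(X) → F'^i(X) is an isomorphism for all i and all X ∈ S. -/
/-!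
Both halves of `IsIso` are proved by ascending induction on the degree, starting below the
bound `d` where all the objects vanish. Applying `φ` to the long exact sequence of a triangle
`X → X' → Y → X⟦1⟧` gives a map of exact sequences on which `φ` is invertible at the `X'`
terms; the four lemma then gives monicity in degree `i + 1` at `X` from monicity in degree `i`
at `Y`, and afterwards epicity in degree `i + 1` at `X` from epicity in degree `i` and
monicity in degree `i + 1` at `Y`.
-/

open CategoryTheory Category Limits Pretriangulated

attribute [local instance] Functor.ShiftSequence.tautological

theorem Int.forall_of_forall_lt_of_add_one {P : ℤ → Prop} (d : ℤ) (base : ∀ i < d, P i)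
    (succ : ∀ i, P i → P (i + 1)) : ∀ i, P i := by
  intro i
  rcases lt_or_ge i (d - 1) with hi | hi
  · exact base i (by omega)
  induction i, hi using Int.leInduction with
  | base => exact base _ (by omega)
  | succ n _ ih => exact succ n ih

namespace CategoryTheory.NatTrans

section

variable {C A : Type*} [Category C] [HasShift C ℤ] [Category A] {F F' : C ⥤ A} (φ : F ⟶ F')

lemma homologySequenceδ_comp_app (T : Triangle C) (n₀ n₁ : ℤ) (h : n₀ + 1 = n₁) :
    F.homologySequenceδ T n₀ n₁ h ≫ φ.app (T.obj₁⟦n₁⟧) =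
      φ.app (T.obj₃⟦n₀⟧) ≫ F'.homologySequenceδ T n₀ n₁ h := by
  simp only [Functor.homologySequenceδ, Functor.shiftMap, Functor.shiftIso,
    Functor.ShiftSequence.tautological]
  dsimp [Functor.shift, Functor.ShiftSequence.sequence]
  simp only [id_comp, assoc, NatTrans.naturality, NatTrans.naturality_assoc]

end

section

variable {C A : Type*} [Category C] [Preadditive C] [HasZeroObject C] [HasShift C ℤ]
  [∀ n : ℤ, (shiftFunctor C n).Additive] [Pretriangulated C] [Category A] [Abelian A]
  {F F' : C ⥤ A} [F.IsHomological] [F'.IsHomological] (φ : F ⟶ F')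
  (T : Triangle C) (n₀ n₁ : ℤ) (hn : n₀ + 1 = n₁)

noncomputable def homologySequenceComposableArrows₅Map :
    F.homologySequenceComposableArrows₅ T n₀ n₁ hn ⟶
      F'.homologySequenceComposableArrows₅ T n₀ n₁ hn :=
  ComposableArrows.homMk₅ (φ.app _) (φ.app _) (φ.app _) (φ.app _) (φ.app _) (φ.app _)
    (φ.naturality _) (φ.naturality _) (homologySequenceδ_comp_app φ T n₀ n₁ hn)
    (φ.naturality _) (φ.naturality _)

variable {X₁ X₂ X₃ : C} {f : X₁ ⟶ X₂} {g : X₂ ⟶ X₃} {h : X₃ ⟶ X₁⟦(1 : ℤ)⟧}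
  (hT : Triangle.mk f g h ∈ distTriang C)
include hn hT

lemma mono_app_shift_of_distTriang [Epi (φ.app (X₂⟦n₀⟧))] [Mono (φ.app (X₃⟦n₀⟧))]
    [Mono (φ.app (X₂⟦n₁⟧))] : Mono (φ.app (X₁⟦n₁⟧)) :=
  Abelian.mono_of_epi_of_mono_of_mono'' (n := 5) (k := 1) (by omega)
    (F.homologySequenceComposableArrows₅_exact _ hT n₀ n₁ hn)
    (F'.homologySequenceComposableArrows₅_exact _ hT n₀ n₁ hn)
    (homologySequenceComposableArrows₅Map φ _ n₀ n₁ hn) 1 2 3 4 rfl rfl rfl rfl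
    ‹_› ‹_› ‹_›

lemma epi_app_shift_of_distTriang [Epi (φ.app (X₃⟦n₀⟧))] [Epi (φ.app (X₂⟦n₁⟧))]
    [Mono (φ.app (X₃⟦n₁⟧))] : Epi (φ.app (X₁⟦n₁⟧)) :=
  Abelian.epi_of_epi_of_epi_of_mono'' (n := 5) (k := 2) le_rfl
    (F.homologySequenceComposableArrows₅_exact _ hT n₀ n₁ hn)
    (F'.homologySequenceComposableArrows₅_exact _ hT n₀ n₁ hn)
    (homologySequenceComposableArrows₅Map φ _ n₀ n₁ hn) 2 3 4 5 rfl rfl rfl rfl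
    ‹_› ‹_› ‹_›

end

end CategoryTheory.NatTrans

/-- an effaceability criterion for a natural transformation of
cohomological (homological) functors to be an isomorphism on a set `S` of objects.
Here `F.obj (X⟦i⟧)` plays the role of `F^i(X)`. -/
theorem stmt0 {D : Type*} [Category D] [Preadditive D] [HasZeroObject D]
    [HasShift D ℤ] [∀ n : ℤ, (shiftFunctor D n).Additive] [Pretriangulated D]
    {A : Type*} [Category A] [Abelian A]
    (F F' : D ⥤ A) [F.IsHomological] [F'.IsHomological]
    (φ : F ⟶ F') (S : Set D)
    (h1 : ∃ d : ℤ, ∀ i : ℤ, i < d → ∀ X ∈ S,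
      IsZero (F.obj (X⟦i⟧)) ∧ IsZero (F'.obj (X⟦i⟧)))
    (h2 : ∀ X ∈ S, ∃ (X' Y : D) (f : X ⟶ X') (g : X' ⟶ Y) (h : Y ⟶ X⟦(1 : ℤ)⟧),
      (Triangle.mk f g h ∈ distTriang D) ∧ Y ∈ S ∧ ∀ i : ℤ, IsIso (φ.app (X'⟦i⟧))) :
    ∀ X ∈ S, ∀ i : ℤ, IsIso (φ.app (X⟦i⟧)) := by
  obtain ⟨d, hd⟩ := h1
  have hmono : ∀ i, ∀ X ∈ S, Mono (φ.app (X⟦i⟧)) :=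
    Int.forall_of_forall_lt_of_add_one d (fun i hi X hX => (hd i hi X hX).1.mono _)
      fun i ih X hX => by
        obtain ⟨X', Y, f, g, h, hT, hY, hX'⟩ := h2 X hX
        have := ih Y hY
        exact NatTrans.mono_app_shift_of_distTriang φ i (i + 1) rfl hT
  have hepi : ∀ i, ∀ X ∈ S, Epi (φ.app (X⟦i⟧)) :=
    Int.forall_of_forall_lt_of_add_one d (fun i hi X hX => (hd i hi X hX).2.epi _)
      fun i ih X hX => by
        obtain ⟨X', Y, f, g, h, hT, hY, hX'⟩ := h2 X hX
        have := ih Y hY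
        have := hmono (i + 1) Y hY
        exact NatTrans.epi_app_shift_of_distTriang φ i (i + 1) rfl hT
  intro X hX i
  have := hmono i X hX
  have := hepi i X hX
  exact isIso_of_mono_of_epi _
end

section
/- Let p: D → D' be a triangulated functor admitting a left adjoint i: D' → D such that the composition p ∘ i is isomorphic to the identity of D' (via the counit/unit of the adjunction). Then p induces an equivalence D / Ker(p) ≅ D', where Ker(p) is the thick (full triangulated, closed under direct summands) subcategory of objects X with p(X) ≅ 0, and D / Ker(p) is the Verdier quotient. -/
open CategoryTheory Limits Pretriangulated

/-!
Since `p` is triangulated, the cone of `f` is killed by `p` exactly when `p.map f` is an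
isomorphism, so `W` is the class of morphisms inverted by `p`. The unit `𝟭 ⟶ i ⋙ p` being an
isomorphism makes the left adjoint `i` fully faithful, and a functor with a fully faithful left
adjoint is a localization at the morphisms it inverts.
-/

namespace CategoryTheory.Functor

variable {C : Type*} [Category C] [Preadditive C] [HasZeroObject C] [HasShift C ℤ]
  [∀ n : ℤ, (shiftFunctor C n).Additive] [Pretriangulated C]
  {D : Type*} [Category D] [Preadditive D] [HasZeroObject D] [HasShift D ℤ]
  [∀ n : ℤ, (shiftFunctor D n).Additive] [Pretriangulated D]

lemma isIso_map_iff_exists_distinguished_isZero_map (F : C ⥤ D) [F.CommShift ℤ]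
    [F.IsTriangulated] {X Y : C} (f : X ⟶ Y) :
    IsIso (F.map f) ↔ ∃ (Z : C) (g : Y ⟶ Z) (h : Z ⟶ X⟦(1 : ℤ)⟧),
      (Triangle.mk f g h ∈ distTriang C) ∧ IsZero (F.obj Z) := by
  constructor
  · intro hf
    obtain ⟨Z, g, h, hT⟩ := distinguished_cocone_triangle f
    exact ⟨Z, g, h, hT, Triangle.isZero₃_of_isIso₁ _ (F.map_distinguished _ hT) hf⟩
  · rintro ⟨Z, g, h, hT, hZ⟩
    exact (Triangle.isZero₃_iff_isIso₁ _ (F.map_distinguished _ hT)).1 hZ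

end CategoryTheory.Functor

/-- a triangulated functor `p` admitting a left adjoint `i` which is
also a right inverse (the unit `𝟭 ⟶ i ⋙ p` is an isomorphism) exhibits the target
as the Verdier quotient of the source by the kernel of `p`, i.e. `p` is the
localization at the class of morphisms whose cone is killed by `p`. -/
theorem stmt9 {D : Type u} [Category.{v} D] [Preadditive D] [HasZeroObject D]
    [HasShift D ℤ] [∀ n : ℤ, (shiftFunctor D n).Additive] [Pretriangulated D]
    {D' : Type u'} [Category.{v'} D'] [Preadditive D'] [HasZeroObject D']
    [HasShift D' ℤ] [∀ n : ℤ, (shiftFunctor D' n).Additive] [Pretriangulated D']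
    (p : D ⥤ D') [p.CommShift ℤ] [p.IsTriangulated]
    (i : D' ⥤ D) (adj : i ⊣ p) [IsIso adj.unit]
    (W : MorphismProperty D)
    (hW : ∀ ⦃X Y : D⦄ (f : X ⟶ Y), W f ↔
      ∃ (Z : D) (g : Y ⟶ Z) (h : Z ⟶ X⟦(1 : ℤ)⟧),
        (Triangle.mk f g h ∈ distTriang D) ∧ IsZero (p.obj Z)) :
    p.IsLocalization W := by
  obtain rfl : W = (MorphismProperty.isomorphisms D').inverseImage p := by
    ext X Y f
    exact (hW f).trans (p.isIso_map_iff_exists_distinguished_isZero_map f).symm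
  have := adj.fullyFaithfulLOfIsIsoUnit.full
  have := adj.fullyFaithfulLOfIsIsoUnit.faithful
  exact adj.isLocalization'
end

section
/- Let T, T': D → D be triangulated endofunctors of a triangulated category D, and η: T → T' a natural transformation. Suppose D has a bounded t-structure with heart A, both T and T' send D^{<0} into D^{<0}, and η is an isomorphism on a full subcategory D₀ ⊆ D such that every object of D is isomorphic to an object of D₀ up to truncation, i.e. for every X ∈ D and every n there exists X₀ ∈ D₀ and a morphism X₀ → X whose cone lies in D^{<-n}. Then η_X is an isomorphism for every X ∈ D. -/
/-!
Fix `X` and test `η_X` against an arbitrary `Y`, which lies in `D^{≥a}` for some `a`. Choose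
`X₀ → X` in `D₀` whose cone `Z` lies in `D^{≤a-2}`. Both `T` and `T'` keep `Z` in `D^{≤a-2}`, so
`Hom(TZ, Y) = Hom(TZ[-1], Y) = 0` and the long exact sequence identifies `Hom(TX, Y)` with
`Hom(TX₀, Y)`, and likewise for `T'`. Since `η_{X₀}` is invertible, naturality of `η` makes
`Hom(η_X, Y)` bijective, and Yoneda concludes.
-/

open CategoryTheory Limits Pretriangulated Triangulated

lemma CategoryTheory.NatTrans.bijective_precomp_app_of_bijective_precomp_map {C E : Type*}
    [Category C] [Category E] {F G : C ⥤ E} (η : F ⟶ G) {X₀ X : C} (f : X₀ ⟶ X)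
    [IsIso (η.app X₀)] (Y : E)
    (hF : Function.Bijective fun x : F.obj X ⟶ Y => F.map f ≫ x)
    (hG : Function.Bijective fun x : G.obj X ⟶ Y => G.map f ≫ x) :
    Function.Bijective fun x : G.obj X ⟶ Y => η.app X ≫ x := by
  have hcomm : (fun x : F.obj X ⟶ Y => F.map f ≫ x) ∘ (fun x : G.obj X ⟶ Y => η.app X ≫ x) =
      (fun x : G.obj X₀ ⟶ Y => η.app X₀ ≫ x) ∘ (fun x : G.obj X ⟶ Y => G.map f ≫ x) := by
    funext x
    simp only [Function.comp_apply, ← Category.assoc, η.naturality]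
  have hη₀ := (isIso_iff_coyoneda_map_bijective (η.app X₀)).1 inferInstance Y
  exact (Function.Bijective.of_comp_iff' hF _).1 (hcomm ▸ hη₀.comp hG)

section

-- Qualified, since inside `namespace Triangle` the bare name means `Triangle.shiftFunctor`.
variable {D : Type*} [Category D] [Preadditive D] [HasZeroObject D] [HasShift D ℤ]
  [∀ n : ℤ, (CategoryTheory.shiftFunctor D n).Additive] [Pretriangulated D]

namespace CategoryTheory.Pretriangulated.Triangle

lemma bijective_precomp_mor₁ {Tr : Triangle D} (hTr : Tr ∈ distTriang D) (Y : D)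
    (h₃ : ∀ g : Tr.obj₃ ⟶ Y, g = 0) (h₃' : ∀ g : Tr.obj₃⟦(-1 : ℤ)⟧ ⟶ Y, g = 0) :
    Function.Bijective fun x : Tr.obj₂ ⟶ Y => Tr.mor₁ ≫ x := by
  constructor
  · intro φ₁ φ₂ h
    obtain ⟨g, hg⟩ := Triangle.yoneda_exact₂ _ hTr (φ₁ - φ₂ : Tr.obj₂ ⟶ Y) (by
      rw [Preadditive.comp_sub, sub_eq_zero]
      exact h)
    rw [h₃ g, comp_zero, sub_eq_zero] at hg
    exact hg
  · intro ψ
    obtain ⟨g, hg⟩ := Triangle.yoneda_exact₂ _ (inv_rot_of_distTriang _ hTr) ψ (h₃' _)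
    exact ⟨g, hg.symm⟩

end CategoryTheory.Pretriangulated.Triangle

namespace CategoryTheory.Triangulated.TStructure

variable (t : TStructure D)

lemma le_obj_of_commShift (F : D ⥤ D) [F.CommShift ℤ]
    (hF : ∀ X : D, t.le (-1) X → t.le (-1) (F.obj X)) {X : D} {m : ℤ} (hX : t.le m X) :
    t.le m (F.obj X) := by
  have hFX : t.le (-1) ((F.obj X)⟦m + 1⟧) :=
    (t.le (-1)).prop_of_iso ((F.commShiftIso (m + 1)).app X)
      (hF _ (t.le_shift m (m + 1) (-1) (by lia) X hX))
  exact (t.le m).prop_of_iso (shiftShiftNeg (F.obj X) (m + 1))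
    (t.le_shift (-1) (-(m + 1)) m (by lia) _ hFX)

lemma bijective_precomp_mor₁_of_le_of_ge {Tr : Triangle D} (hTr : Tr ∈ distTriang D) {n : ℤ}
    (h₃ : t.le n Tr.obj₃) {Y : D} (hY : t.ge (n + 2) Y) :
    Function.Bijective fun x : Tr.obj₂ ⟶ Y => Tr.mor₁ ≫ x :=
  Triangle.bijective_precomp_mor₁ hTr Y
    (fun g => t.zero_of_isLE_of_isGE g n (n + 2) (by lia) ⟨h₃⟩ ⟨hY⟩)
    (fun g => t.zero_of_isLE_of_isGE g (n + 1) (n + 2) (by lia)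
      ⟨t.le_shift n (-1) (n + 1) (by lia) _ h₃⟩ ⟨hY⟩)

end CategoryTheory.Triangulated.TStructure

end

/-- let `η : T ⟶ T'` be a natural transformation between
triangulated endofunctors of a category with a bounded t-structure `t`, both
preserving `D^{<0}`. If `η` is an isomorphism on a full subcategory `D₀` such that
every object can be approximated by objects of `D₀` up to cones in arbitrarily
negative degrees, then `η` is an isomorphism everywhere. -/
theorem stmt12 {D : Type u} [Category.{v} D] [Preadditive D] [HasZeroObject D]
    [HasShift D ℤ] [∀ n : ℤ, (shiftFunctor D n).Additive] [Pretriangulated D]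
    (t : TStructure D)
    (hbounded : ∀ X : D, ∃ a b : ℤ, t.ge a X ∧ t.le b X)
    (T T' : D ⥤ D) [T.CommShift ℤ] [T.IsTriangulated]
    [T'.CommShift ℤ] [T'.IsTriangulated]
    (η : T ⟶ T')
    (hT : ∀ X : D, t.le (-1) X → t.le (-1) (T.obj X))
    (hT' : ∀ X : D, t.le (-1) X → t.le (-1) (T'.obj X))
    (D₀ : Set D)
    (hη : ∀ X ∈ D₀, IsIso (η.app X))
    (happrox : ∀ (X : D) (n : ℤ), ∃ X₀ ∈ D₀, ∃ (f : X₀ ⟶ X) (Z : D)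
      (g : X ⟶ Z) (h : Z ⟶ X₀⟦(1 : ℤ)⟧),
      (Triangle.mk f g h ∈ distTriang D) ∧ t.le (-n - 1) Z) :
    ∀ X : D, IsIso (η.app X) := by
  intro X
  refine isIso_of_coyoneda_map_bijective _ fun Y => ?_
  obtain ⟨a, -, hY, -⟩ := hbounded Y
  obtain ⟨X₀, hX₀, f, Z, g, h, hdist, hZ⟩ := happrox X (1 - a)
  have hY' : t.ge (-(1 - a) - 1 + 2) Y := by rwa [show -(1 - a) - 1 + 2 = a by lia]
  have := hη X₀ hX₀
  exact η.bijective_precomp_app_of_bijective_precomp_map f Y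
    (t.bijective_precomp_mor₁_of_le_of_ge (T.map_distinguished _ hdist)
      (t.le_obj_of_commShift T hT hZ) hY')
    (t.bijective_precomp_mor₁_of_le_of_ge (T'.map_distinguished _ hdist)
      (t.le_obj_of_commShift T' hT' hZ) hY')
end
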